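/- Let h ≥ 2 and let 𝓑 = (B_1,...,B_h) be an h-tuple of sets of positive integers with representation function g_𝓑(n) = #{(b_1,...,b_h) ∈ B_1 × ... × B_h : b_1 ⋯ b_h = n}. If g_𝓑(n) ≥ 2 for all sufficiently large n, then g_𝓑 is unbounded: for every m there exists n with g_𝓑(n) ≥ m. -/

import Mathlib

/-!
Suppose `g_𝓑 < m` everywhere. Colour each finite set `A` of large primes by the set of indices `i`
with `∏ A ∈ B i`; by the infinite Ramsey theorem there is an infinite set `T` of primes on which the
colour of `A` depends only on `#A`, for all `#A ≤ h * m`. A prime `p ∈ T` has two representations,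
so `1 ∈ B i` for all `i` and `p` lies in two different `B ℓ₁`, `B ℓ₂`, hence so does every prime
of `T`. A representation of the product of `h * m` primes of `T` has a coordinate `ℓ` that is the
product of a set `S` of at least `m` of them. Then for any set `A'` of `#S + 1` primes of `T` and
any `a ∈ A'`, putting `a` in a coordinate `ℓ₀ ∈ {ℓ₁, ℓ₂} \ {ℓ}`, `∏ (A' \ {a})` in coordinate `ℓ`
and `1` elsewhere represents `∏ A'`, which gives `#S + 1 > m` representations.
-/

open Finset

section Ramsey

variable {κ : Type*}

def IsHomogeneous {α : Type*} (f : Finset α → κ) (n : ℕ) (T : Set α) : Prop :=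
  ∀ A A' : Finset α, ↑A ⊆ T → ↑A' ⊆ T → #A = n → #A' = n → f A = f A'

theorem IsHomogeneous.mono {α : Type*} {f : Finset α → κ} {n : ℕ} {T T' : Set α}
    (h : IsHomogeneous f n T) (hT : T' ⊆ T) : IsHomogeneous f n T' :=
  fun A A' hA hA' => h A A' (hA.trans hT) (hA'.trans hT)

theorem isHomogeneous_zero {α : Type*} (f : Finset α → κ) (T : Set α) :
    IsHomogeneous f 0 T := by
  intro A A' _ _ hA hA'
  rw [card_eq_zero.1 hA, card_eq_zero.1 hA']

variable {n : ℕ}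

theorem exists_strictMono_isHomogeneous_insert
    (ih : ∀ S : Set ℕ, S.Infinite → ∀ f : Finset ℕ → κ,
      ∃ T ⊆ S, T.Infinite ∧ IsHomogeneous f n T)
    (f : Finset ℕ → κ) {S : Set ℕ} (hS : S.Infinite) :
    ∃ a : ℕ → ℕ, StrictMono a ∧ (∀ i, a i ∈ S) ∧
      ∀ i, IsHomogeneous (fun A => f (insert (a i) A)) n (a '' Set.Ioi i) := by
  have step : ∀ U : {U : Set ℕ // U.Infinite}, ∃ V ⊆ U.1, V.Infinite ∧ (∀ v ∈ V, sInf U.1 < v) ∧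
      IsHomogeneous (fun A => f (insert (sInf U.1) A)) n V := fun ⟨U, hU⟩ => by
    obtain ⟨V, hV, hVinf, hhom⟩ :=
      ih (U \ Set.Iic (sInf U)) (hU.sdiff (Set.finite_Iic _)) fun A => f (insert (sInf U) A)
    exact ⟨V, fun v hv => (hV hv).1, hVinf, fun v hv => not_le.1 (hV hv).2, hhom⟩
  choose V hVU hVinf hVgt hVhom using step
  let W : ℕ → {U : Set ℕ // U.Infinite} := fun i => (fun U => ⟨V U, hVinf U⟩)^[i] ⟨S, hS⟩
  have hW : ∀ i, (W (i + 1)).1 = V (W i) := fun i => by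
    simp only [W, Function.iterate_succ_apply']
  have hWanti : Antitone fun i => (W i).1 := antitone_nat_of_succ_le fun i => hW i ▸ hVU (W i)
  have hmem : ∀ i, sInf (W i).1 ∈ (W i).1 := fun i => Nat.sInf_mem (W i).2.nonempty
  refine ⟨fun i => sInf (W i).1,
    strictMono_nat_of_lt_succ fun i => hVgt (W i) _ (hW i ▸ hmem _),
    fun i => hWanti (Nat.zero_le i) (hmem i), fun i => (hVhom (W i)).mono ?_⟩
  rintro _ ⟨j, hij, rfl⟩
  exact hW i ▸ hWanti (Nat.succ_le_of_lt hij) (hmem j)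

theorem isHomogeneous_image_preimage {f : Finset ℕ → κ} {a : ℕ → ℕ} (ha : StrictMono a)
    {c : ℕ → κ} (hc : ∀ i A, ↑A ⊆ a '' Set.Ioi i → #A = n → f (insert (a i) A) = c i)
    (k : κ) :
    IsHomogeneous f (n + 1) (a '' (c ⁻¹' {k})) := by
  suffices key : ∀ A : Finset ℕ, ↑A ⊆ a '' (c ⁻¹' {k}) → #A = n + 1 → f A = k from
    fun A A' hA hA' hAn hA'n => (key A hA hAn).trans (key A' hA' hA'n).symm
  intro A hA hAn
  have hne : A.Nonempty := card_pos.1 (by omega)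
  obtain ⟨i, hi, hai⟩ := hA (A.min'_mem hne)
  have haiA : a i ∈ A := hai ▸ A.min'_mem hne
  have hrest : ↑(A.erase (a i)) ⊆ a '' Set.Ioi i := by
    intro y hy
    obtain ⟨hya, hyA⟩ := mem_erase.1 hy
    obtain ⟨j, -, rfl⟩ := hA hyA
    exact ⟨j, ha.lt_iff_lt.1 (lt_of_le_of_ne (hai ▸ A.min'_le _ hyA) (Ne.symm hya)), rfl⟩
  rw [← insert_erase haiA, hc i _ hrest (by rw [card_erase_of_mem haiA]; omega)]
  exact hi

theorem Set.Infinite.exists_isHomogeneous [Finite κ] (n : ℕ) {S : Set ℕ} (hS : S.Infinite)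
    (f : Finset ℕ → κ) : ∃ T ⊆ S, T.Infinite ∧ IsHomogeneous f n T := by
  induction n generalizing S f with
  | zero => exact ⟨S, subset_rfl, hS, isHomogeneous_zero f S⟩
  | succ n ih =>
    obtain ⟨a, ha, haS, hhom⟩ :=
      exists_strictMono_isHomogeneous_insert (fun S hS f => ih hS f) f hS
    choose σ hσ hσn using fun i =>
      ((Set.Ioi_infinite i).image ha.injective.injOn).exists_subset_card_eq n
    obtain ⟨k, hk⟩ := Finite.exists_infinite_fiber fun i => f (insert (a i) (σ i))
    refine ⟨_, ?_, (Set.infinite_coe_iff.1 hk).image ha.injective.injOn,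
      isHomogeneous_image_preimage ha (fun i A hA hAn => hhom i A (σ i) hA (hσ i) hAn (hσn i)) k⟩
    rintro _ ⟨i, -, rfl⟩
    exact haS i

theorem Set.Infinite.exists_isHomogeneous_forall_le [Finite κ] (K : ℕ) {S : Set ℕ}
    (hS : S.Infinite) (f : Finset ℕ → κ) :
    ∃ T ⊆ S, T.Infinite ∧ ∀ j ≤ K, IsHomogeneous f j T := by
  induction K with
  | zero => exact ⟨S, subset_rfl, hS, fun j hj => Nat.le_zero.1 hj ▸ isHomogeneous_zero f S⟩
  | succ K ih =>
    obtain ⟨T, hTS, hT, hhom⟩ := ih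
    obtain ⟨T', hT'T, hT', hhom'⟩ := hT.exists_isHomogeneous (K + 1) f
    refine ⟨T', hT'T.trans hTS, hT', fun j hj => ?_⟩
    obtain hj | rfl := Nat.le_succ_iff.1 hj
    · exact (hhom j hj).mono hT'T
    · exact hhom'

end Ramsey

theorem Nat.squarefree_prod_of_forall_prime {A : Finset ℕ} (hA : ∀ p ∈ A, p.Prime) :
    Squarefree (∏ p ∈ A, p) :=
  squarefree_prod_of_pairwise_isCoprime
    (fun p hp q hq hpq =>
      Nat.coprime_iff_isRelPrime.1 ((Nat.coprime_primes (hA p hp) (hA q hq)).2 hpq))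
    fun p hp => (hA p hp).squarefree

section Representations

variable {ι : Type*} {B : ι → Set ℕ} {T : Set ℕ}

def membershipPattern (B : ι → Set ℕ) (A : Finset ℕ) : ι → Prop :=
  fun i => ∏ p ∈ A, p ∈ B i

theorem IsHomogeneous.prod_mem {n : ℕ} (h : IsHomogeneous (membershipPattern B) n T)
    {A A' : Finset ℕ} (hA : ↑A ⊆ T) (hA' : ↑A' ⊆ T) (hAn : #A = n) (hA'n : #A' = n) {i : ι}
    (hAi : ∏ p ∈ A, p ∈ B i) : ∏ p ∈ A', p ∈ B i :=
  cast (congrFun (h A A' hA hA' hAn hA'n) i) hAi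

theorem IsHomogeneous.subset_of_mem (h : IsHomogeneous (membershipPattern B) 1 T) {p : ℕ}
    (hp : p ∈ T) {i : ι} (hpi : p ∈ B i) : T ⊆ B i := fun q hq => by
  simpa using h.prod_mem (A := {p}) (A' := {q}) (by simpa using hp) (by simpa using hq)
    (card_singleton p) (card_singleton q) (by simpa using hpi)

variable [Fintype ι]

def representations (B : ι → Set ℕ) (n : ℕ) : Set (ι → ℕ) :=
  {b | (∀ i, b i ∈ B i) ∧ ∏ i, b i = n}

theorem finite_representations (B : ι → Set ℕ) {n : ℕ} (hn : n ≠ 0) :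
    (representations B n).Finite :=
  (Set.Finite.pi fun _ => Set.finite_Iic n).subset fun b hb =>
    Set.mem_univ_pi.2 fun i => Nat.le_of_dvd (Nat.pos_of_ne_zero hn)
      (hb.2 ▸ dvd_prod_of_mem b (mem_univ i))

theorem eq_mulSingle_of_prod_eq_prime [DecidableEq ι] {b : ι → ℕ} {p : ℕ} (hp : p.Prime)
    (hb : ∏ i, b i = p) : ∃ ℓ, b = Pi.mulSingle ℓ p := by
  obtain ⟨ℓ, -, hℓ⟩ := hp.prime.exists_mem_finset_dvd (hb ▸ dvd_rfl : p ∣ ∏ i, b i)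
  have hbℓ : b ℓ = p := Nat.dvd_antisymm (hb ▸ dvd_prod_of_mem b (mem_univ ℓ)) hℓ
  have hrest : ∏ i ∈ univ.erase ℓ, b i = 1 := by
    rw [← mul_prod_erase univ b (mem_univ ℓ), hbℓ] at hb
    exact (Nat.mul_eq_left hp.ne_zero).1 hb
  refine ⟨ℓ, funext fun i => ?_⟩
  rcases eq_or_ne i ℓ with rfl | hi
  · simp [hbℓ]
  · rw [Pi.mulSingle_eq_of_ne hi]
    exact prod_eq_one_iff.1 hrest i (mem_erase.2 ⟨hi, mem_univ i⟩)

theorem exists_ne_of_one_lt_ncard_representations [DecidableEq ι] {p : ℕ} (hp : p.Prime)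
    (h : 1 < (representations B p).ncard) :
    ∃ ℓ₁ ℓ₂, ℓ₁ ≠ ℓ₂ ∧ p ∈ B ℓ₁ ∧ p ∈ B ℓ₂ ∧ ∀ i, 1 ∈ B i := by
  obtain ⟨b, b', ⟨hbB, hb⟩, ⟨hb'B, hb'⟩, hne⟩ :=
    (Set.one_lt_ncard_iff (finite_representations B hp.ne_zero)).1 h
  obtain ⟨ℓ₁, rfl⟩ := eq_mulSingle_of_prod_eq_prime hp hb
  obtain ⟨ℓ₂, rfl⟩ := eq_mulSingle_of_prod_eq_prime hp hb'
  have hℓ : ℓ₁ ≠ ℓ₂ := by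
    rintro rfl
    exact hne rfl
  refine ⟨ℓ₁, ℓ₂, hℓ, by simpa using hbB ℓ₁, by simpa using hb'B ℓ₂, fun i => ?_⟩
  rcases eq_or_ne i ℓ₁ with rfl | hi
  · simpa [hℓ] using hb'B i
  · simpa [hi] using hbB i

theorem exists_subset_prod_mem_of_mem_representations [Nonempty ι] {A : Finset ℕ}
    (hA : ∀ p ∈ A, p.Prime) {c : ι → ℕ} (hc : c ∈ representations B (∏ p ∈ A, p)) :
    ∃ ℓ, ∃ S ⊆ A, #A ≤ Fintype.card ι * #S ∧ ∏ p ∈ S, p ∈ B ℓ := by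
  obtain ⟨hcB, hcA⟩ := hc
  obtain ⟨ℓ, -, hℓ⟩ := univ.exists_max_image (fun i => #(c i).primeFactors) univ_nonempty
  have hA0 : ∏ p ∈ A, p ≠ 0 := prod_ne_zero_iff.2 fun p hp => (hA p hp).ne_zero
  have hc0 : ∀ i, c i ≠ 0 := fun i h0 => hA0 (hcA ▸ prod_eq_zero (mem_univ i) h0)
  have hcℓ : c ℓ ∣ ∏ p ∈ A, p := hcA ▸ dvd_prod_of_mem c (mem_univ ℓ)
  have hAc : A ⊆ univ.biUnion fun i => (c i).primeFactors := by
    intro p hp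
    obtain ⟨i, -, hpi⟩ := (hA p hp).prime.exists_mem_finset_dvd
      (hcA ▸ dvd_prod_of_mem id hp : p ∣ ∏ i, c i)
    exact mem_biUnion.2 ⟨i, mem_univ i, Nat.mem_primeFactors.2 ⟨hA p hp, hpi, hc0 i⟩⟩
  refine ⟨ℓ, (c ℓ).primeFactors, Nat.primeFactors_prod hA ▸ Nat.primeFactors_mono hcℓ hA0, ?_, ?_⟩
  · calc #A ≤ ∑ i, #(c i).primeFactors := (card_le_card hAc).trans card_biUnion_le
      _ ≤ Fintype.card ι * #(c ℓ).primeFactors := by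
        simpa using sum_le_card_nsmul univ _ _ fun i _ => hℓ i (mem_univ i)
  · rw [Nat.prod_primeFactors_of_squarefree
      ((Nat.squarefree_prod_of_forall_prime hA).squarefree_of_dvd hcℓ)]
    exact hcB ℓ

theorem card_le_ncard_representations [DecidableEq ι] {ℓ₀ ℓ : ι} (hne : ℓ₀ ≠ ℓ)
    (hone : ∀ i, 1 ∈ B i) {A : Finset ℕ} (hA0 : 0 ∉ A) (hAℓ₀ : ∀ a ∈ A, a ∈ B ℓ₀)
    (hAℓ : ∀ a ∈ A, ∏ p ∈ A.erase a, p ∈ B ℓ) :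
    #A ≤ (representations B (∏ p ∈ A, p)).ncard := by
  let F : ℕ → ι → ℕ := fun a => Pi.mulSingle ℓ₀ a * Pi.mulSingle ℓ (∏ p ∈ A.erase a, p)
  have hF : ∀ a ∈ (A : Set ℕ), F a ∈ representations B (∏ p ∈ A, p) := by
    intro a ha
    refine ⟨fun i => ?_, ?_⟩
    · rcases eq_or_ne i ℓ₀ with rfl | h₀
      · simpa [F, hne] using hAℓ₀ a ha
      rcases eq_or_ne i ℓ with rfl | h
      · simpa [F, h₀] using hAℓ a ha
      · simpa [F, h₀, h] using hone i
    · simpa [F, prod_mul_distrib] using mul_prod_erase A id ha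
  have hinj : Set.InjOn F A := fun a _ a' _ h => by simpa [F, hne] using congrFun h ℓ₀
  rw [← Set.ncard_coe_finset A]
  exact Set.ncard_le_ncard_of_injOn F hF hinj
    (finite_representations B (prod_ne_zero_iff.2 fun a ha h0 => hA0 (h0 ▸ ha)))

theorem exists_subset_le_card_prod_mem [Nonempty ι] {N m : ℕ} (hm : 0 < m) (hT : T.Infinite)
    (hTN : ∀ p ∈ T, p.Prime ∧ N ≤ p) (hN : ∀ n, N ≤ n → (representations B n).Nonempty) :
    ∃ ℓ, ∃ S : Finset ℕ, ↑S ⊆ T ∧ m ≤ #S ∧ #S ≤ Fintype.card ι * m ∧ ∏ p ∈ S, p ∈ B ℓ := by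
  obtain ⟨A, hAT, hA⟩ := hT.exists_subset_card_eq (Fintype.card ι * m)
  obtain ⟨q, hq⟩ := card_pos.1 (hA ▸ Nat.mul_pos Fintype.card_pos hm)
  have hAN : N ≤ ∏ p ∈ A, p :=
    (hTN q (hAT hq)).2.trans (single_le_prod' (fun p hp => (hTN p (hAT hp)).1.one_le) hq)
  obtain ⟨c, hc⟩ := hN _ hAN
  obtain ⟨ℓ, S, hSA, hAS, hSℓ⟩ :=
    exists_subset_prod_mem_of_mem_representations (fun p hp => (hTN p (hAT hp)).1) hc
  exact ⟨ℓ, S, (coe_subset.2 hSA).trans hAT,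
    Nat.le_of_mul_le_mul_left (hA ▸ hAS) Fintype.card_pos, hA ▸ card_le_card hSA, hSℓ⟩

theorem exists_card_lt_ncard_representations [DecidableEq ι] (hT : T.Infinite) (hT0 : 0 ∉ T)
    {S : Finset ℕ} (hST : ↑S ⊆ T) (hhom : IsHomogeneous (membershipPattern B) #S T)
    {ℓ₀ ℓ : ι} (hne : ℓ₀ ≠ ℓ) (hone : ∀ i, 1 ∈ B i) (hTℓ₀ : T ⊆ B ℓ₀)
    (hSℓ : ∏ p ∈ S, p ∈ B ℓ) : ∃ n, #S < (representations B n).ncard := by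
  obtain ⟨A, hAT, hA⟩ := hT.exists_subset_card_eq (#S + 1)
  refine ⟨∏ p ∈ A, p, ?_⟩
  rw [← Nat.add_one_le_iff, ← hA]
  refine card_le_ncard_representations hne hone (fun h0 => hT0 (hAT h0))
    (fun a ha => hTℓ₀ (hAT ha)) fun a ha => ?_
  exact hhom.prod_mem hST ((coe_subset.2 (erase_subset a A)).trans hAT) rfl
    (by rw [card_erase_of_mem ha, hA, Nat.add_sub_cancel]) hSℓ

end Representations

theorem multiplicative_system_two_implies_unbounded_general (h : ℕ)
    (B : Fin h → Set ℕ)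
    (g : ℕ → ℕ)
    (hg : ∀ n, g n = {b : Fin h → ℕ | (∀ i, b i ∈ B i) ∧ ∏ i, b i = n}.ncard)
    (hbig : ∃ N, ∀ n, N ≤ n → 2 ≤ g n) :
    ∀ m : ℕ, ∃ n : ℕ, m ≤ g n := by
  obtain rfl : g = fun n => (representations B n).ncard := funext hg
  obtain ⟨N, hN⟩ := hbig
  intro m
  by_contra! hm
  have hP : {p | p.Prime ∧ N ≤ p}.Infinite :=
    (Nat.infinite_setOfPred_prime.sdiff (Set.finite_Iio N)).mono
      fun p hp => ⟨hp.1, not_lt.1 hp.2⟩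
  obtain ⟨T, hTP, hT, hhom⟩ := hP.exists_isHomogeneous_forall_le (h * m) (membershipPattern B)
  obtain ⟨p₀, hp₀⟩ := hT.nonempty
  obtain ⟨ℓ₁, ℓ₂, hℓ, h₁, h₂, hone⟩ :=
    exists_ne_of_one_lt_ncard_representations (hTP hp₀).1 (hN p₀ (hTP hp₀).2)
  have : Nonempty (Fin h) := ⟨ℓ₁⟩
  have hm0 : 0 < m := (Nat.zero_le _).trans_lt (hm 0)
  obtain ⟨ℓ, S, hST, hmS, hSK, hSℓ⟩ := exists_subset_le_card_prod_mem (B := B) hm0 hT hTP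
    fun n hn => Set.nonempty_of_ncard_ne_zero <| by
      have : 2 ≤ (representations B n).ncard := hN n hn
      omega
  obtain ⟨ℓ₀, hℓ₀, hTℓ₀⟩ : ∃ ℓ₀, ℓ₀ ≠ ℓ ∧ T ⊆ B ℓ₀ := by
    have hhom₁ := hhom 1 (Nat.mul_pos ℓ₁.pos hm0)
    rcases eq_or_ne ℓ₁ ℓ with rfl | h₁ℓ
    · exact ⟨ℓ₂, hℓ.symm, hhom₁.subset_of_mem hp₀ h₂⟩
    · exact ⟨ℓ₁, h₁ℓ, hhom₁.subset_of_mem hp₀ h₁⟩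
  obtain ⟨n, hn⟩ := exists_card_lt_ncard_representations hT (fun h0 => (hTP h0).1.ne_zero rfl)
    hST (hhom _ (by simpa using hSK)) hℓ₀ hone hTℓ₀ hSℓ
  have := hm n
  omega

/-- Main theorem: if `𝓑 = (B 1, …, B h)` is an `h`-tuple of sets of positive integers
(`h ≥ 2`) whose representation function `g` satisfies `g n ≥ 2` for all sufficiently
large `n`, then `g` is unbounded. -/
theorem multiplicative_system_two_implies_unbounded (h : ℕ) (hh : 2 ≤ h)
    (B : Fin h → Set ℕ) (hBpos : ∀ i, ∀ b ∈ B i, 0 < b)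
    (g : ℕ → ℕ)
    (hg : ∀ n, g n = {b : Fin h → ℕ | (∀ i, b i ∈ B i) ∧ ∏ i, b i = n}.ncard)
    (hbig : ∃ N, ∀ n, N ≤ n → 2 ≤ g n) :
    ∀ m : ℕ, ∃ n : ℕ, m ≤ g n :=
  multiplicative_system_two_implies_unbounded_general h B g hg hbig
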